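/- In the two-colour unfair Pólya urn with m_b ≥ m_w and B_0 ≥ 1, W_0 ≥ 1, the event {lim sup_{n→∞} W_n/B_n < 1} has positive probability. -/

import Mathlib

open MeasureTheory ProbabilityTheory Filter Real

/-- A two-colour unfair Pólya urn: `B n`, `W n` are the numbers of black and white balls
after `n` draws.  At each step a ball is drawn uniformly at random; if it is black,
`mb` black balls are added, and if it is white, `mw` white balls are added.
The uniform drawing rule is encoded by the conditional probability (given the natural
filtration of the process) of a black draw being `B n / (B n + W n)`. -/
structure PolyaUrn (Ω : Type*) [MeasurableSpace Ω] where
  μ : Measure Ω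
  isProb : IsProbabilityMeasure μ
  mb : ℕ
  mw : ℕ
  mb_pos : 0 < mb
  mw_pos : 0 < mw
  B : ℕ → Ω → ℕ
  W : ℕ → Ω → ℕ
  measB : ∀ n, Measurable (B n)
  measW : ∀ n, Measurable (W n)
  /-- each step either adds `mb` black balls (black draw) or `mw` white balls (white draw) -/
  step : ∀ n ω, (B (n+1) ω = B n ω + mb ∧ W (n+1) ω = W n ω) ∨
                (B (n+1) ω = B n ω ∧ W (n+1) ω = W n ω + mw)
  /-- the natural filtration generated by the process `(B, W)` -/
  𝓕 : Filtration ℕ ‹MeasurableSpace Ω›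
  h𝓕 : ∀ n, 𝓕 n = ⨆ i ∈ Set.Iic n, MeasurableSpace.comap (fun ω => (B i ω, W i ω)) inferInstance
  /-- conditionally on the past, a black ball is drawn at step `n`
  with probability `B n / (B n + W n)` -/
  hcond : ∀ n, (μ[(fun ω => if B (n+1) ω = B n ω + mb then (1:ℝ) else 0) | 𝓕 n])
      =ᵐ[μ] fun ω => (B n ω : ℝ) / ((B n ω : ℝ) + (W n ω : ℝ))

/-!
When `mw ≤ mb` the white fraction `S n = W n / (B n + W n)` is a bounded supermartingale, so it
converges almost surely to some `S∞`. With positive probability the urn starts with at most `M`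
white balls and the first `4M` draws are black; on that event `A` we have `S (4M) ≤ 1/5`, hence
`∫_A S∞ ≤ P(A)/5` and `S∞ < 1/2` on a non-null part of `A`. There `W n / B n = S n / (1 - S n)`
converges to `S∞ / (1 - S∞) < 1`.
-/

open Topology

namespace MeasureTheory

variable {Ω : Type*} {m0 : MeasurableSpace Ω} {μ : Measure Ω} [IsFiniteMeasure μ]

theorem Supermartingale.exists_ae_tendsto_of_abs_le {𝒢 : Filtration ℕ m0}
    {f : ℕ → Ω → ℝ} (hf : Supermartingale f 𝒢 μ) {C : ℝ} (hC : ∀ n ω, |f n ω| ≤ C) :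
    ∃ g : Ω → ℝ, Integrable g μ ∧ ∀ᵐ ω ∂μ, Tendsto (fun n => f n ω) atTop (𝓝 (g ω)) := by
  have hbdd : ∀ n, eLpNorm ((-f) n) 1 μ ≤ (μ Set.univ * ENNReal.ofReal C).toNNReal := fun n => by
    rw [ENNReal.coe_toNNReal (ENNReal.mul_ne_top (measure_ne_top μ _) ENNReal.ofReal_ne_top)]
    simpa using eLpNorm_le_of_ae_bound (p := 1) (ae_of_all μ fun ω => by simpa using hC n ω)
  obtain ⟨g, hg, hlim⟩ : ∃ g : Ω → ℝ, StronglyMeasurable g ∧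
      ∀ᵐ ω ∂μ, Tendsto (fun n => f n ω) atTop (𝓝 (g ω)) :=
    ⟨_, Filtration.stronglyMeasurable_limit_process'.neg, by
      filter_upwards [hf.neg.ae_tendsto_limitProcess hbdd] with ω hω
      simpa using hω.neg⟩
  refine ⟨g, .of_bound hg.aestronglyMeasurable C ?_, hlim⟩
  filter_upwards [hlim] with ω hω
  exact le_of_tendsto' hω.norm fun n => hC n ω

theorem Supermartingale.setIntegral_le_of_tendsto {𝒢 : Filtration ℕ m0}
    {f : ℕ → Ω → ℝ} (hf : Supermartingale f 𝒢 μ) {C : ℝ} (hC : ∀ n ω, |f n ω| ≤ C)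
    {g : Ω → ℝ} (hg : ∀ᵐ ω ∂μ, Tendsto (fun n => f n ω) atTop (𝓝 (g ω)))
    {k : ℕ} {A : Set Ω} (hA : MeasurableSet[𝒢 k] A) :
    ∫ ω in A, g ω ∂μ ≤ ∫ ω in A, f k ω ∂μ := by
  have hlim : Tendsto (fun n => ∫ ω in A, f n ω ∂μ) atTop (𝓝 (∫ ω in A, g ω ∂μ)) :=
    tendsto_integral_of_dominated_convergence (fun _ => C)
      (fun n => ((hf.stronglyMeasurable n).mono (𝒢.le n)).aestronglyMeasurable)
      (integrable_const C) (fun n => ae_of_all _ (hC n)) (ae_restrict_of_ae hg)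
  exact le_of_tendsto hlim (eventually_atTop.2 ⟨k, fun n hn => hf.setIntegral_le hn hA⟩)

theorem measure_inter_setOf_lt_pos {A : Set Ω} (hA : MeasurableSet A)
    (hμA : 0 < μ A) {g : Ω → ℝ} (hg : IntegrableOn g A μ) {c d : ℝ} (hcd : c < d)
    (hint : ∫ ω in A, g ω ∂μ ≤ c * μ.real A) : 0 < μ (A ∩ {ω | g ω < d}) := by
  by_contra! h
  have hge : ∀ᵐ ω ∂μ.restrict A, d ≤ g ω := by
    rw [ae_iff, Measure.restrict_apply' hA]
    simpa [Set.inter_comm] using h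
  have hdg : d * μ.real A ≤ ∫ ω in A, g ω ∂μ := by
    simpa [setIntegral_const, mul_comm] using
      setIntegral_mono_ae_restrict (integrableOn_const (measure_ne_top μ A)) hg hge
  have hμA' : 0 < μ.real A := ENNReal.toReal_pos hμA.ne' (measure_ne_top μ A)
  nlinarith

theorem mul_measureReal_le_of_condExp_indicator_ge {m : MeasurableSpace Ω}
    (hm : m ≤ m0) {A E : Set Ω} (hA : MeasurableSet[m] A) (hE : MeasurableSet[m0] E) {c : ℝ}
    (hc : ∀ᵐ ω ∂μ, ω ∈ A → c ≤ μ[E.indicator 1 | m] ω) : c * μ.real A ≤ μ.real (A ∩ E) := by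
  have hint : Integrable (E.indicator (1 : Ω → ℝ)) μ := (integrable_const 1).indicator hE
  calc c * μ.real A = ∫ _ in A, c ∂μ := by rw [setIntegral_const, smul_eq_mul, mul_comm]
    _ ≤ ∫ ω in A, μ[E.indicator 1 | m] ω ∂μ :=
      setIntegral_mono_ae_restrict (integrableOn_const (measure_ne_top μ A))
        integrable_condExp.integrableOn ((ae_restrict_iff' (hm A hA)).2 hc)
    _ = μ.real (A ∩ E) := by
      rw [setIntegral_condExp hm hint hA, integral_indicator_one hE, measureReal_restrict_apply hE,
        Set.inter_comm]

end MeasureTheory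

namespace PolyaUrn

variable {Ω : Type*} [MeasurableSpace Ω] (U : PolyaUrn Ω)

instance isProbabilityMeasure_μ : IsProbabilityMeasure U.μ := U.isProb

theorem mw_mul_B_add_mb_mul_W (n : ℕ) (ω : Ω) :
    U.mw * U.B n ω + U.mb * U.W n ω = U.mw * U.B 0 ω + U.mb * U.W 0 ω + n * (U.mb * U.mw) := by
  induction n with
  | zero => simp
  | succ n ih => rcases U.step n ω with ⟨hB, hW⟩ | ⟨hB, hW⟩ <;> rw [hB, hW] <;> linarith

theorem B_eq_of_W_eq {k : ℕ} {ω : Ω} (h : U.W k ω = U.W 0 ω) : U.B k ω = U.B 0 ω + k * U.mb := by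
  have := U.mw_mul_B_add_mb_mul_W k ω
  rw [h] at this
  exact Nat.eq_of_mul_eq_mul_left U.mw_pos (by linarith)

theorem one_le_B (hB0 : ∀ ω, 1 ≤ U.B 0 ω) (n : ℕ) (ω : Ω) : 1 ≤ U.B n ω := by
  induction n with
  | zero => exact hB0 ω
  | succ n ih => rcases U.step n ω with ⟨h, -⟩ | ⟨h, -⟩ <;> omega

theorem measurable_B_W {i n : ℕ} (h : i ≤ n) :
    Measurable[U.𝓕 n] fun ω => (U.B i ω, U.W i ω) := by
  rw [measurable_iff_comap_le, U.h𝓕 n]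
  exact le_biSup (fun i => MeasurableSpace.comap (fun ω => (U.B i ω, U.W i ω)) inferInstance)
    (Set.mem_Iic.2 h)

theorem measurable_B {i n : ℕ} (h : i ≤ n) : Measurable[U.𝓕 n] fun ω => (U.B i ω : ℝ) :=
  measurable_from_top.comp (measurable_fst.comp (U.measurable_B_W h))

theorem measurable_W {i n : ℕ} (h : i ≤ n) : Measurable[U.𝓕 n] fun ω => (U.W i ω : ℝ) :=
  measurable_from_top.comp (measurable_snd.comp (U.measurable_B_W h))

def blackDraw (n : ℕ) : Set Ω := {ω | U.B (n + 1) ω = U.B n ω + U.mb}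

theorem measurableSet_blackDraw (n : ℕ) : MeasurableSet (U.blackDraw n) :=
  measurableSet_eq_fun (U.measB (n + 1)) ((U.measB n).add_const U.mb)

theorem condExp_indicator_blackDraw (n : ℕ) :
    U.μ[(U.blackDraw n).indicator 1 | U.𝓕 n]
      =ᵐ[U.μ] fun ω => (U.B n ω : ℝ) / ((U.B n ω : ℝ) + (U.W n ω : ℝ)) := by
  convert U.hcond n using 3 with ω
  simp [blackDraw, Set.indicator_apply]

theorem W_succ_of_mem_blackDraw {n : ℕ} {ω : Ω} (h : ω ∈ U.blackDraw n) :
    U.W (n + 1) ω = U.W n ω := by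
  have hblack : U.B (n + 1) ω = U.B n ω + U.mb := h
  rcases U.step n ω with ⟨-, hW⟩ | ⟨hB, -⟩
  · exact hW
  · have := U.mb_pos
    omega

noncomputable def whiteFraction (n : ℕ) (ω : Ω) : ℝ :=
  (U.W n ω : ℝ) / ((U.B n ω : ℝ) + (U.W n ω : ℝ))

theorem measurable_whiteFraction {n m : ℕ} (h : n ≤ m) : Measurable[U.𝓕 m] (U.whiteFraction n) :=
  (U.measurable_W h).div ((U.measurable_B h).add (U.measurable_W h))

theorem whiteFraction_nonneg (n : ℕ) (ω : Ω) : 0 ≤ U.whiteFraction n ω := by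
  unfold whiteFraction; positivity

theorem whiteFraction_le_one (n : ℕ) (ω : Ω) : U.whiteFraction n ω ≤ 1 :=
  div_le_one_of_le₀ (le_add_of_nonneg_left (Nat.cast_nonneg _)) (by positivity)

theorem abs_whiteFraction_le_one (n : ℕ) (ω : Ω) : |U.whiteFraction n ω| ≤ 1 := by
  rw [abs_of_nonneg (U.whiteFraction_nonneg n ω)]
  exact U.whiteFraction_le_one n ω

theorem integrable_whiteFraction (n : ℕ) : Integrable (U.whiteFraction n) U.μ :=
  .of_bound ((U.measurable_whiteFraction le_rfl).mono (U.𝓕.le n) le_rfl).aestronglyMeasurable 1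
    (ae_of_all _ (U.abs_whiteFraction_le_one n))

theorem whiteFraction_step_le {b w mB mW : ℝ} (hb : 0 ≤ b) (hw : 0 ≤ w) (hbw : 0 < b + w)
    (hmW : 0 < mW) (hm : mW ≤ mB) :
    b / (b + w) * (w / (b + w + mB)) + (1 - b / (b + w)) * ((w + mW) / (b + w + mW))
      ≤ w / (b + w) := by
  have hB : 0 < b + w + mB := by linarith
  have hW : 0 < b + w + mW := by linarith
  have hgap : w / (b + w) -
      (b / (b + w) * (w / (b + w + mB)) + (1 - b / (b + w)) * ((w + mW) / (b + w + mW)))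
      = b * w * (mB - mW) / ((b + w) * (b + w + mB) * (b + w + mW)) := by
    field_simp
    ring
  have : 0 ≤ b * w * (mB - mW) / ((b + w) * (b + w + mB) * (b + w + mW)) :=
    div_nonneg (mul_nonneg (mul_nonneg hb hw) (sub_nonneg.2 hm)) (by positivity)
  linarith

noncomputable def whiteFractionIfBlack (n : ℕ) (ω : Ω) : ℝ :=
  (U.W n ω : ℝ) / ((U.B n ω : ℝ) + (U.W n ω : ℝ) + (U.mb : ℝ))

noncomputable def whiteFractionIfWhite (n : ℕ) (ω : Ω) : ℝ :=
  ((U.W n ω : ℝ) + (U.mw : ℝ)) / ((U.B n ω : ℝ) + (U.W n ω : ℝ) + (U.mw : ℝ))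

theorem whiteFraction_succ (n : ℕ) :
    U.whiteFraction (n + 1) = (U.whiteFractionIfBlack n - U.whiteFractionIfWhite n) *
      (U.blackDraw n).indicator 1 + U.whiteFractionIfWhite n := by
  funext ω
  have := U.mb_pos
  rcases U.step n ω with ⟨hB, hW⟩ | ⟨hB, hW⟩
  · have hω : ω ∈ U.blackDraw n := hB
    simp [whiteFraction, whiteFractionIfBlack, hω, hB, hW, add_right_comm]
  · have hω : ω ∉ U.blackDraw n := by simp [blackDraw, hB]; omega
    simp [whiteFraction, whiteFractionIfWhite, hω, hB, hW, add_assoc]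

theorem supermartingale_whiteFraction (hm : U.mw ≤ U.mb) (hB0 : ∀ ω, 1 ≤ U.B 0 ω) :
    Supermartingale U.whiteFraction U.𝓕 U.μ := by
  refine supermartingale_nat (fun n => (U.measurable_whiteFraction le_rfl).stronglyMeasurable)
    U.integrable_whiteFraction fun n => ?_
  set a := U.whiteFractionIfBlack n
  set d := U.whiteFractionIfWhite n
  set I := (U.blackDraw n).indicator (1 : Ω → ℝ)
  have hden : Measurable[U.𝓕 n] fun ω => (U.B n ω : ℝ) + (U.W n ω : ℝ) :=
    (U.measurable_B le_rfl).add (U.measurable_W le_rfl)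
  have ha : StronglyMeasurable[U.𝓕 n] a :=
    ((U.measurable_W le_rfl).div (hden.add_const _)).stronglyMeasurable
  have hd : StronglyMeasurable[U.𝓕 n] d :=
    (((U.measurable_W le_rfl).add_const _).div (hden.add_const _)).stronglyMeasurable
  have hb : ∀ ω, (1 : ℝ) ≤ U.B n ω := fun ω => by exact_mod_cast U.one_le_B hB0 n ω
  have hmw : (0 : ℝ) < U.mw := by exact_mod_cast U.mw_pos
  have hfrac : ∀ {x y : ℝ}, 0 ≤ x → x ≤ y → 0 ≤ x / y ∧ x / y ≤ 1 := fun hx hxy =>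
    ⟨div_nonneg hx (hx.trans hxy), div_le_one_of_le₀ hxy (hx.trans hxy)⟩
  have ha01 : ∀ ω, 0 ≤ a ω ∧ a ω ≤ 1 := fun ω =>
    hfrac (Nat.cast_nonneg _) (by linarith [hb ω])
  have hd01 : ∀ ω, 0 ≤ d ω ∧ d ω ≤ 1 := fun ω =>
    hfrac (by positivity) (by linarith [hb ω])
  have hI : Integrable I U.μ := (integrable_const 1).indicator (U.measurableSet_blackDraw n)
  have hd_int : Integrable d U.μ :=
    .of_bound (hd.mono (U.𝓕.le n)).aestronglyMeasurable 1 (ae_of_all _ fun ω =>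
      abs_le.2 ⟨by linarith [hd01 ω], (hd01 ω).2⟩)
  have hadI : Integrable ((a - d) * I) U.μ :=
    hI.bdd_mul ((ha.sub hd).mono (U.𝓕.le n)).aestronglyMeasurable (c := 1) (ae_of_all _ fun ω =>
      abs_sub_le_iff.2 ⟨by linarith [ha01 ω, hd01 ω], by linarith [ha01 ω, hd01 ω]⟩)
  have hcond : U.μ[U.whiteFraction (n + 1) | U.𝓕 n] =ᵐ[U.μ] (a - d) * U.μ[I | U.𝓕 n] + d := by
    rw [U.whiteFraction_succ n]
    filter_upwards [condExp_add hadI hd_int (U.𝓕 n),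
      condExp_mul_of_stronglyMeasurable_left (ha.sub hd) hadI hI] with ω h1 h2
    rw [h1, Pi.add_apply, h2, condExp_of_stronglyMeasurable (U.𝓕.le n) hd hd_int]
    rfl
  filter_upwards [hcond, U.condExp_indicator_blackDraw n] with ω h1 h2
  rw [h1, Pi.add_apply, Pi.mul_apply, h2]
  set p := (U.B n ω : ℝ) / ((U.B n ω : ℝ) + (U.W n ω : ℝ))
  calc (a ω - d ω) * p + d ω = p * a ω + (1 - p) * d ω := by ring
    _ ≤ U.whiteFraction n ω := whiteFraction_step_le (Nat.cast_nonneg _) (Nat.cast_nonneg _)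
      (by linarith [hb ω, (Nat.cast_nonneg _ : (0 : ℝ) ≤ U.W n ω)]) hmw (by exact_mod_cast hm)

theorem exists_measure_W_zero_le_pos : ∃ M : ℕ, 0 < U.μ {ω | U.W 0 ω ≤ M} := by
  by_contra! h
  have hnull : U.μ (⋃ M : ℕ, {ω | U.W 0 ω ≤ M}) = 0 :=
    measure_iUnion_null fun M => nonpos_iff_eq_zero.1 (h M)
  rw [Set.iUnion_eq_univ_iff.2 fun ω => ⟨U.W 0 ω, le_refl (U.W 0 ω)⟩, measure_univ] at hnull
  exact one_ne_zero hnull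

-- `W k = W 0` says that the first `k` draws are all black.
def blackStart (M k : ℕ) : Set Ω := {ω | U.W 0 ω ≤ M ∧ U.W k ω = U.W 0 ω}

theorem measurableSet_blackStart (M k : ℕ) : MeasurableSet[U.𝓕 k] (U.blackStart M k) := by
  have hW : ∀ {i}, i ≤ k → Measurable[U.𝓕 k] (U.W i) := fun hi =>
    measurable_snd.comp (U.measurable_B_W hi)
  exact (measurableSet_le (hW k.zero_le) measurable_const).inter
    (measurableSet_eq_fun (hW le_rfl) (hW k.zero_le))

theorem blackStart_inter_blackDraw_subset (M k : ℕ) :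
    U.blackStart M k ∩ U.blackDraw k ⊆ U.blackStart M (k + 1) := fun _ ⟨⟨hM, hk⟩, hblack⟩ =>
  ⟨hM, (U.W_succ_of_mem_blackDraw hblack).trans hk⟩

theorem one_div_succ_le_B_div_of_mem_blackStart (hB0 : ∀ ω, 1 ≤ U.B 0 ω) {M k : ℕ} {ω : Ω}
    (hω : ω ∈ U.blackStart M k) :
    1 / ((M : ℝ) + 1) ≤ (U.B k ω : ℝ) / ((U.B k ω : ℝ) + (U.W k ω : ℝ)) := by
  have hB : (1 : ℝ) ≤ U.B k ω := by exact_mod_cast U.one_le_B hB0 k ω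
  have hW : (U.W k ω : ℝ) ≤ M := by exact_mod_cast hω.2.trans_le hω.1
  rw [div_le_div_iff₀ (by positivity) (by positivity)]
  nlinarith

theorem measure_blackStart_pos (hB0 : ∀ ω, 1 ≤ U.B 0 ω) {M : ℕ}
    (hM : 0 < U.μ {ω | U.W 0 ω ≤ M}) (k : ℕ) : 0 < U.μ (U.blackStart M k) := by
  induction k with
  | zero => simpa [blackStart] using hM
  | succ k ih =>
    have hlow : 1 / ((M : ℝ) + 1) * U.μ.real (U.blackStart M k)
        ≤ U.μ.real (U.blackStart M k ∩ U.blackDraw k) :=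
      mul_measureReal_le_of_condExp_indicator_ge (U.𝓕.le k) (U.measurableSet_blackStart M k)
        (U.measurableSet_blackDraw k) (by
          filter_upwards [U.condExp_indicator_blackDraw k] with ω hω hmem
          rw [hω]
          exact U.one_div_succ_le_B_div_of_mem_blackStart hB0 hmem)
    have hpos : 0 < U.μ.real (U.blackStart M k ∩ U.blackDraw k) :=
      lt_of_lt_of_le (mul_pos (by positivity) (ENNReal.toReal_pos ih.ne' (measure_ne_top _ _))) hlow
    exact (ENNReal.toReal_pos_iff.1 hpos).1.trans_le
      (measure_mono (U.blackStart_inter_blackDraw_subset M k))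

theorem whiteFraction_le_of_mem_blackStart {M : ℕ} {ω : Ω} (hω : ω ∈ U.blackStart M (4 * M)) :
    U.whiteFraction (4 * M) ω ≤ 1 / 5 := by
  have hB := U.B_eq_of_W_eq hω.2
  have hmb := U.mb_pos
  have h4 : 4 * U.W (4 * M) ω ≤ U.B (4 * M) ω := by rw [hB, hω.2]; nlinarith [hω.1]
  have h4' : 4 * (U.W (4 * M) ω : ℝ) ≤ U.B (4 * M) ω := by exact_mod_cast h4
  exact div_le_of_le_mul₀ (by positivity) (by norm_num) (by linarith)

theorem limsup_W_div_B_lt_one (hB0 : ∀ ω, 1 ≤ U.B 0 ω) {ω : Ω} {L : ℝ}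
    (hL : Tendsto (fun n => U.whiteFraction n ω) atTop (𝓝 L)) (hL2 : L < 1 / 2) :
    limsup (fun n => (U.W n ω : ℝ) / (U.B n ω : ℝ)) atTop < 1 := by
  have hratio : ∀ n, (U.W n ω : ℝ) / U.B n ω = U.whiteFraction n ω / (1 - U.whiteFraction n ω) := by
    intro n
    have hB : (0 : ℝ) < U.B n ω := by exact_mod_cast U.one_le_B hB0 n ω
    have hBW : (0 : ℝ) < U.B n ω + U.W n ω := by positivity
    unfold whiteFraction
    rw [one_sub_div hBW.ne', add_sub_cancel_right, div_div_div_cancel_right₀ hBW.ne']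
  have hlim : Tendsto (fun n => (U.W n ω : ℝ) / U.B n ω) atTop (𝓝 (L / (1 - L))) := by
    simp_rw [hratio]
    exact hL.div (tendsto_const_nhds.sub hL) (by linarith)
  rw [hlim.limsup_eq, div_lt_one (by linarith)]
  linarith

end PolyaUrn

theorem stmt17_general {Ω : Type*} [MeasurableSpace Ω] (U : PolyaUrn Ω)
    (hm : U.mw ≤ U.mb) (hB0 : ∀ ω, 1 ≤ U.B 0 ω) :
    0 < U.μ {ω | limsup (fun n => (U.W n ω : ℝ) / (U.B n ω : ℝ)) atTop < 1} := by
  obtain ⟨M, hM⟩ := U.exists_measure_W_zero_le_pos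
  set A := U.blackStart M (4 * M)
  have hA : MeasurableSet[U.𝓕 (4 * M)] A := U.measurableSet_blackStart M (4 * M)
  have hS := U.supermartingale_whiteFraction hm hB0
  obtain ⟨g, hg_int, hg⟩ := hS.exists_ae_tendsto_of_abs_le U.abs_whiteFraction_le_one
  have hgA : ∫ ω in A, g ω ∂U.μ ≤ 1 / 5 * U.μ.real A :=
    calc ∫ ω in A, g ω ∂U.μ ≤ ∫ ω in A, U.whiteFraction (4 * M) ω ∂U.μ :=
          hS.setIntegral_le_of_tendsto U.abs_whiteFraction_le_one hg hA
      _ ≤ ∫ _ in A, 1 / 5 ∂U.μ :=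
          setIntegral_mono_on (U.integrable_whiteFraction _).integrableOn
            (integrableOn_const (measure_ne_top _ _)) (U.𝓕.le _ _ hA)
            fun ω hω => U.whiteFraction_le_of_mem_blackStart hω
      _ = 1 / 5 * U.μ.real A := by rw [setIntegral_const, smul_eq_mul, mul_comm]
  have hpos : 0 < U.μ (A ∩ {ω | g ω < 1 / 2}) :=
    measure_inter_setOf_lt_pos (U.𝓕.le _ _ hA) (U.measure_blackStart_pos hB0 hM _)
      hg_int.integrableOn (by norm_num) hgA
  refine hpos.trans_le (measure_mono_ae ?_)
  filter_upwards [hg] with ω hω ⟨_, hlt⟩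
  exact U.limsup_W_div_B_lt_one hB0 hω hlt

/-- In the two-colour unfair Pólya urn with `mb ≥ mw` and at least one ball of each colour
initially, the event `{limsup W n / B n < 1}` has positive probability. -/
theorem stmt17 {Ω : Type*} [MeasurableSpace Ω] (U : PolyaUrn Ω)
    (hm : U.mw ≤ U.mb) (hB0 : ∀ ω, 1 ≤ U.B 0 ω) (hW0 : ∀ ω, 1 ≤ U.W 0 ω) :
    0 < U.μ {ω | limsup (fun n => (U.W n ω : ℝ) / (U.B n ω : ℝ)) atTop < 1} :=
  stmt17_general U hm hB0
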